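/- arXiv:1404.4766 — 7 statements merged into one kernel-verified Lean document; each statement's English description precedes it below -/
import Mathlib

section
/- Let S be a finite set and p : S → ℝ with p j ≥ 0 for all j ∈ S; for a subset T ⊆ S write p(T) = Σ_{j ∈ T} p j. Then for every subset A ⊆ S, (1 / 2^{|S|}) · Σ_{T ⊆ S} min(p(T), p(S \ T)) ≥ (1/2) · min(p(A), p(S \ A)). -/
open scoped symmDiff

private lemma min4_aux (a b c d : ℝ) (ha : 0 ≤ a) (hb : 0 ≤ b) (hc : 0 ≤ c) (hd : 0 ≤ d) :
    min (a + b) (c + d) ≤ min (a + c) (b + d) + min (b + c) (a + d) := by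
  rcases min_cases (a + c) (b + d) with ⟨e1, h1⟩ | ⟨e1, h1⟩ <;>
  rcases min_cases (b + c) (a + d) with ⟨e2, h2⟩ | ⟨e2, h2⟩ <;>
  rw [e1, e2] <;>
  first
  | exact le_trans (min_le_left _ _) (by linarith)
  | exact le_trans (min_le_right _ _) (by linarith)

theorem stmt_1 {α : Type*} [DecidableEq α] (S : Finset α) (p : α → ℝ)
    (hp : ∀ j ∈ S, 0 ≤ p j) (A : Finset α) (hA : A ⊆ S) :
    (1 / (2 : ℝ) ^ S.card) *
        ∑ T ∈ S.powerset, min (∑ j ∈ T, p j) (∑ j ∈ S \ T, p j) ≥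
      (1 / 2) * min (∑ j ∈ A, p j) (∑ j ∈ S \ A, p j) := by
  set m := min (∑ j ∈ A, p j) (∑ j ∈ S \ A, p j) with hm
  set f : Finset α → ℝ := fun T => min (∑ j ∈ T, p j) (∑ j ∈ S \ T, p j) with hf
  have key : ∀ T ∈ S.powerset, m ≤ f T + f (A ∆ T) := by
    intro T hT
    rw [Finset.mem_powerset] at hT
    set a := ∑ j ∈ T ∩ A, p j with hadef
    set b := ∑ j ∈ A \ T, p j with hbdef
    set c := ∑ j ∈ T \ A, p j with hcdef
    set d := ∑ j ∈ S \ (T ∪ A), p j with hddef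
    have ha : 0 ≤ a := Finset.sum_nonneg fun j hj => hp j (hT (Finset.mem_inter.1 hj).1)
    have hb : 0 ≤ b := Finset.sum_nonneg fun j hj => hp j (hA (Finset.mem_sdiff.1 hj).1)
    have hc : 0 ≤ c := Finset.sum_nonneg fun j hj => hp j (hT (Finset.mem_sdiff.1 hj).1)
    have hd : 0 ≤ d := Finset.sum_nonneg fun j hj => hp j (Finset.mem_sdiff.1 hj).1
    have hdisj : Disjoint (A \ T) (S \ (T ∪ A)) := by
      rw [Finset.disjoint_left]
      intro x hx hx'
      simp only [Finset.mem_sdiff, Finset.mem_union] at hx hx'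
      tauto
    have hdisj2 : Disjoint (T \ A) (S \ (T ∪ A)) := by
      rw [Finset.disjoint_left]
      intro x hx hx'
      simp only [Finset.mem_sdiff, Finset.mem_union] at hx hx'
      tauto
    have hdisj3 : Disjoint (T ∩ A) (S \ (T ∪ A)) := by
      rw [Finset.disjoint_left]
      intro x hx hx'
      simp only [Finset.mem_inter, Finset.mem_sdiff, Finset.mem_union] at hx hx'
      tauto
    have e1 : ∑ j ∈ T, p j = a + c := (Finset.sum_inter_add_sum_sdiff T A p).symm
    have e2 : ∑ j ∈ S \ T, p j = b + d := by
      have hset : S \ T = (A \ T) ∪ (S \ (T ∪ A)) := by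
        ext x
        simp only [Finset.mem_sdiff, Finset.mem_union]
        have h1 : x ∈ A → x ∈ S := fun h => hA h
        tauto
      rw [hset, Finset.sum_union hdisj]
    have e3 : ∑ j ∈ A ∆ T, p j = b + c := by
      have hset : A ∆ T = (A \ T) ∪ (T \ A) := rfl
      rw [hset, Finset.sum_union disjoint_sdiff_sdiff]
    have e4 : ∑ j ∈ S \ (A ∆ T), p j = a + d := by
      have hset : S \ (A ∆ T) = (T ∩ A) ∪ (S \ (T ∪ A)) := by
        ext x
        simp only [Finset.mem_sdiff, Finset.mem_union, Finset.mem_inter, Finset.mem_symmDiff]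
        have h1 : x ∈ A → x ∈ S := fun h => hA h
        have h2 : x ∈ T → x ∈ S := fun h => hT h
        tauto
      rw [hset, Finset.sum_union hdisj3]
    have e5 : ∑ j ∈ A, p j = a + b := by
      rw [← Finset.sum_inter_add_sum_sdiff A T p, Finset.inter_comm]
    have e6 : ∑ j ∈ S \ A, p j = c + d := by
      have hset : S \ A = (T \ A) ∪ (S \ (T ∪ A)) := by
        ext x
        simp only [Finset.mem_sdiff, Finset.mem_union]
        have h2 : x ∈ T → x ∈ S := fun h => hT h
        tauto
      rw [hset, Finset.sum_union hdisj2]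
    simp only [hf, hm, e1, e2, e3, e4, e5, e6]
    exact min4_aux a b c d ha hb hc hd
  have hbij : ∑ T ∈ S.powerset, f (A ∆ T) = ∑ T ∈ S.powerset, f T := by
    apply Finset.sum_nbij' (fun T => A ∆ T) (fun T => A ∆ T)
    · intro T hT
      rw [Finset.mem_powerset] at hT ⊢
      calc A ∆ T ≤ A ⊔ T := symmDiff_le_sup
        _ ≤ S := sup_le hA hT
    · intro T hT
      rw [Finset.mem_powerset] at hT ⊢
      calc A ∆ T ≤ A ⊔ T := symmDiff_le_sup
        _ ≤ S := sup_le hA hT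
    · intro T _; exact symmDiff_symmDiff_cancel_left A T
    · intro T _; exact symmDiff_symmDiff_cancel_left A T
    · intro T _; rfl
  have htot : (2 : ℝ) ^ S.card * m ≤ 2 * ∑ T ∈ S.powerset, f T := by
    have h := Finset.sum_le_sum key
    rw [Finset.sum_const, Finset.card_powerset, Finset.sum_add_distrib, hbij,
      nsmul_eq_mul] at h
    push_cast at h
    linarith
  have h2 : (0 : ℝ) < 2 ^ S.card := by positivity
  rw [ge_iff_le, one_div, one_div, inv_mul_eq_div, inv_mul_eq_div, le_div_iff₀ h2]
  nlinarith [htot]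
end

section
/- Let S be a finite set and p : S → ℝ with p j ≥ 0 for all j ∈ S; write p(T) = Σ_{j ∈ T} p j for T ⊆ S. Then for every subset A ⊆ S, (1 / 2^{|S|}) · Σ_{T ⊆ S} max(p(T), p(S \ T)) ≤ (3/2) · max(p(A), p(S \ A)). -/
open Finset

/-- Pointwise identity: `|u+t| + |u-t| = 2 * max |u| |t|`. -/
lemma abs_add_abs_sub' (u t : ℝ) : |u + t| + |u - t| = 2 * max |u| |t| := by
  rcases max_cases |u| |t| with ⟨h5, h5'⟩ | ⟨h5, h5'⟩ <;>
  rcases abs_cases u with ⟨h1, h1'⟩ | ⟨h1, h1'⟩ <;>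
  rcases abs_cases t with ⟨h2, h2'⟩ | ⟨h2, h2'⟩ <;>
  rcases abs_cases (u + t) with ⟨h3, h3'⟩ | ⟨h3, h3'⟩ <;>
  rcases abs_cases (u - t) with ⟨h4, h4'⟩ | ⟨h4, h4'⟩ <;>
  linarith

/-- Reindexing the powerset sum by complementation. -/
lemma reindex {α : Type*} [DecidableEq α] (S : Finset α) (p : α → ℝ) (f : ℝ → ℝ) :
    ∑ T ∈ S.powerset, f (2 * ∑ j ∈ T, p j - ∑ j ∈ S, p j) =
    ∑ T ∈ S.powerset, f (-(2 * ∑ j ∈ T, p j - ∑ j ∈ S, p j)) := by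
  refine Finset.sum_nbij' (fun T => S \ T) (fun T => S \ T) ?_ ?_ ?_ ?_ ?_
  · intro T hT; simp only [mem_powerset] at *; exact sdiff_subset
  · intro T hT; simp only [mem_powerset] at *; exact sdiff_subset
  · intro T hT; simp only [mem_powerset] at hT
    exact Finset.sdiff_sdiff_eq_self hT
  · intro T hT; simp only [mem_powerset] at hT
    exact Finset.sdiff_sdiff_eq_self hT
  · intro T hT; simp only [mem_powerset] at hT
    rw [Finset.sum_sdiff_eq_sub hT]; ring_nf

/-- The shifted absolute-sum equals the max-sum. -/
lemma Lmax {α : Type*} [DecidableEq α] (S : Finset α) (p : α → ℝ) (t : ℝ) :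
    ∑ T ∈ S.powerset, |2 * ∑ j ∈ T, p j - ∑ j ∈ S, p j + t| =
    ∑ T ∈ S.powerset, max |2 * ∑ j ∈ T, p j - ∑ j ∈ S, p j| |t| := by
  have h := reindex S p (fun x => |x + t|)
  have h2 : ∀ T ∈ S.powerset,
      |2 * ∑ j ∈ T, p j - ∑ j ∈ S, p j + t| + |2 * ∑ j ∈ T, p j - ∑ j ∈ S, p j - t|
      = 2 * max |2 * ∑ j ∈ T, p j - ∑ j ∈ S, p j| |t| := fun T _ =>
    abs_add_abs_sub' _ t
  have h3 : ∑ T ∈ S.powerset, |-(2 * ∑ j ∈ T, p j - ∑ j ∈ S, p j) + t|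
      = ∑ T ∈ S.powerset, |2 * ∑ j ∈ T, p j - ∑ j ∈ S, p j - t| := by
    apply Finset.sum_congr rfl; intro T _
    rw [← abs_neg]; ring_nf
  have h4 := Finset.sum_congr rfl h2
  rw [Finset.sum_add_distrib] at h4
  rw [← h3, ← h] at h4
  have h5 : ∑ T ∈ S.powerset, 2 * max |2 * ∑ j ∈ T, p j - ∑ j ∈ S, p j| |t|
      = 2 * ∑ T ∈ S.powerset, max |2 * ∑ j ∈ T, p j - ∑ j ∈ S, p j| |t| := by
    rw [Finset.mul_sum]
  linarith [h4, h5.symm ▸ h4]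

/-- Key scalar inequality for the induction step. -/
lemma key_ineq (c B b' P' : ℝ) (hc : 0 ≤ c) (hb0 : 0 ≤ b') (hbB : b' ≤ B)
    (hbP : b' ≤ P') (hBc : B ≤ P' + c) (hB0 : 0 ≤ B) :
    max |c - B| (2 * b' - P') + max (P' - max |c - B| (2 * b' - P')) 0 / 2
      + (c + B) + max (P' - (c + B)) 0 / 2
      ≤ 2 * (c + max (P' + B - c) 0 / 2) := by
  rcases abs_cases (c - B) with ⟨e1, h1⟩ | ⟨e1, h1⟩ <;> rw [e1] <;>
  rcases max_cases (c - B) (2 * b' - P') with ⟨e2, h2⟩ | ⟨e2, h2⟩ <;>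
  rcases max_cases (-(c - B)) (2 * b' - P') with ⟨e2', h2'⟩ | ⟨e2', h2'⟩ <;>
  first
  | (rw [e2] <;>
     rcases max_cases (P' - (c - B)) (0:ℝ) with ⟨e3, h3⟩ | ⟨e3, h3⟩ <;> rw [e3] <;>
     rcases max_cases (P' - (c + B)) (0:ℝ) with ⟨e4, h4⟩ | ⟨e4, h4⟩ <;> rw [e4] <;>
     rcases max_cases (P' + B - c) (0:ℝ) with ⟨e5, h5⟩ | ⟨e5, h5⟩ <;> rw [e5] <;>
     linarith
   )
  | (rw [e2'] <;>
     rcases max_cases (P' - (-(c - B))) (0:ℝ) with ⟨e3, h3⟩ | ⟨e3, h3⟩ <;> rw [e3] <;>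
     rcases max_cases (P' - (c + B)) (0:ℝ) with ⟨e4, h4⟩ | ⟨e4, h4⟩ <;> rw [e4] <;>
     rcases max_cases (P' + B - c) (0:ℝ) with ⟨e5, h5⟩ | ⟨e5, h5⟩ <;> rw [e5] <;>
     linarith
   )
  | (rw [show max (c - B) (2 * b' - P') = 2 * b' - P' from e2] <;>
     rcases max_cases (P' - (2 * b' - P')) (0:ℝ) with ⟨e3, h3⟩ | ⟨e3, h3⟩ <;> rw [e3] <;>
     rcases max_cases (P' - (c + B)) (0:ℝ) with ⟨e4, h4⟩ | ⟨e4, h4⟩ <;> rw [e4] <;>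
     rcases max_cases (P' + B - c) (0:ℝ) with ⟨e5, h5⟩ | ⟨e5, h5⟩ <;> rw [e5] <;>
     linarith
   )
  | (rw [show max (-(c - B)) (2 * b' - P') = 2 * b' - P' from e2'] <;>
     rcases max_cases (P' - (2 * b' - P')) (0:ℝ) with ⟨e3, h3⟩ | ⟨e3, h3⟩ <;> rw [e3] <;>
     rcases max_cases (P' - (c + B)) (0:ℝ) with ⟨e4, h4⟩ | ⟨e4, h4⟩ <;> rw [e4] <;>
     rcases max_cases (P' + B - c) (0:ℝ) with ⟨e5, h5⟩ | ⟨e5, h5⟩ <;> rw [e5] <;>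
     linarith
   )

lemma ML {α : Type*} [DecidableEq α] (p : α → ℝ) (S : Finset α) :
    (∀ j ∈ S, 0 ≤ p j) → ∀ c : ℝ, 0 ≤ c → (∀ j ∈ S, 2 * p j ≤ (∑ j ∈ S, p j) + c) →
    ∑ T ∈ S.powerset, |2 * ∑ j ∈ T, p j - ∑ j ∈ S, p j + c| ≤
      2 ^ S.card * (c + max ((∑ j ∈ S, p j) - c) 0 / 2) := by
  induction S using Finset.strongInduction with
  | _ S ih =>
    intro hp c hc hcond
    rcases S.eq_empty_or_nonempty with rfl | hne
    · simp only [Finset.powerset_empty, Finset.sum_singleton, Finset.sum_empty,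
        Finset.card_empty, pow_zero, one_mul]
      rw [abs_of_nonneg (by linarith)]
      have : max ((0:ℝ) - c) 0 = 0 := max_eq_right (by linarith)
      rw [this]
      linarith
    · obtain ⟨b, hbS, hbmax⟩ := S.exists_max_image p hne
      set S' := S.erase b with hS'def
      have hbS' : b ∉ S' := Finset.notMem_erase b S
      have hins : insert b S' = S := Finset.insert_erase hbS
      have hsub : S' ⊆ S := Finset.erase_subset b S
      have hP : ∑ j ∈ S, p j = (∑ j ∈ S', p j) + p b := by
        rw [← hins, Finset.sum_insert hbS']; ring
      have hcard : S.card = S'.card + 1 := by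
        rw [← hins, Finset.card_insert_of_notMem hbS']
      have hB0 : 0 ≤ p b := hp b hbS
      -- choose b' : max of p over S' (or 0)
      obtain ⟨b', hb'0, hb'B, hb'P, hb'max⟩ :
          ∃ b', 0 ≤ b' ∧ b' ≤ p b ∧ b' ≤ ∑ j ∈ S', p j ∧ ∀ j ∈ S', p j ≤ b' := by
        rcases S'.eq_empty_or_nonempty with h | h
        · exact ⟨0, le_refl 0, hB0, by simp [h], by simp [h]⟩
        · obtain ⟨a, haS', hamax⟩ := S'.exists_max_image p h
          exact ⟨p a, hp a (hsub haS'), hbmax a (hsub haS'),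
            Finset.single_le_sum (fun j hj => hp j (hsub hj)) haS', hamax⟩
      set P' := ∑ j ∈ S', p j with hP'def
      have hP'0 : 0 ≤ P' := Finset.sum_nonneg (fun j hj => hp j (hsub hj))
      set m := max |c - p b| (2 * b' - P') with hmdef
      have hm0 : 0 ≤ m := le_trans (abs_nonneg _) (le_max_left _ _)
      -- split the powerset sum
      have hsplit : ∑ T ∈ S.powerset, |2 * ∑ j ∈ T, p j - ∑ j ∈ S, p j + c| =
          (∑ T ∈ S'.powerset, |2 * ∑ j ∈ T, p j - P' + (c - p b)|) +
          (∑ T ∈ S'.powerset, |2 * ∑ j ∈ T, p j - P' + (c + p b)|) := by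
        rw [← hins, Finset.sum_powerset_insert hbS']
        congr 1
        · apply Finset.sum_congr rfl; intro T hT
          congr 1
          rw [hins, hP]; ring
        · apply Finset.sum_congr rfl; intro T hT
          have hbT : b ∉ T := fun hb =>
            hbS' (Finset.mem_powerset.mp hT hb)
          congr 1
          rw [Finset.sum_insert hbT, hins, hP]; ring
      have key1 : ∑ T ∈ S'.powerset, |2 * ∑ j ∈ T, p j - P' + (c - p b)| ≤
          2 ^ S'.card * (m + max (P' - m) 0 / 2) := by
        calc ∑ T ∈ S'.powerset, |2 * ∑ j ∈ T, p j - P' + (c - p b)|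
            = ∑ T ∈ S'.powerset, max |2 * ∑ j ∈ T, p j - P'| |c - p b| := Lmax S' p _
          _ ≤ ∑ T ∈ S'.powerset, max |2 * ∑ j ∈ T, p j - P'| m :=
              Finset.sum_le_sum (fun T _ => max_le_max le_rfl (le_max_left _ _))
          _ = ∑ T ∈ S'.powerset, |2 * ∑ j ∈ T, p j - P' + m| := by
              rw [Lmax S' p m, abs_of_nonneg hm0]
          _ ≤ 2 ^ S'.card * (m + max (P' - m) 0 / 2) := by
              apply ih S' (Finset.erase_ssubset hbS) (fun j hj => hp j (hsub hj)) m hm0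
              intro j hj
              have h1 : p j ≤ b' := hb'max j hj
              have h2 : 2 * b' - P' ≤ m := le_max_right _ _
              linarith
      have key2 : ∑ T ∈ S'.powerset, |2 * ∑ j ∈ T, p j - P' + (c + p b)| ≤
          2 ^ S'.card * ((c + p b) + max (P' - (c + p b)) 0 / 2) := by
        apply ih S' (Finset.erase_ssubset hbS) (fun j hj => hp j (hsub hj)) (c + p b)
          (by linarith)
        intro j hj
        have := hcond j (hsub hj)
        rw [hP] at this
        linarith
      have hBc : p b ≤ P' + c := by
        have := hcond b hbS
        rw [hP] at this
        linarith
      have hk := key_ineq c (p b) b' P' hc hb'0 hb'B hb'P hBc hB0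
      have hpow : (0:ℝ) ≤ 2 ^ S'.card := by positivity
      have hfin : 2 ^ S'.card * (m + max (P' - m) 0 / 2) +
          2 ^ S'.card * ((c + p b) + max (P' - (c + p b)) 0 / 2) ≤
          2 ^ S.card * (c + max ((∑ j ∈ S, p j) - c) 0 / 2) := by
        rw [hcard, pow_succ, hP]
        have h2 : P' + p b - c = P' + p b - c := rfl
        calc 2 ^ S'.card * (m + max (P' - m) 0 / 2) +
            2 ^ S'.card * ((c + p b) + max (P' - (c + p b)) 0 / 2)
            = 2 ^ S'.card * ((m + max (P' - m) 0 / 2) +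
              ((c + p b) + max (P' - (c + p b)) 0 / 2)) := by ring
          _ ≤ 2 ^ S'.card * (2 * (c + max (P' + p b - c) 0 / 2)) := by
              apply mul_le_mul_of_nonneg_left _ hpow
              linarith [hk]
          _ = 2 ^ S'.card * 2 * (c + max (P' + p b - c) 0 / 2) := by ring
      rw [hsplit]
      calc _ ≤ 2 ^ S'.card * (m + max (P' - m) 0 / 2) +
            2 ^ S'.card * ((c + p b) + max (P' - (c + p b)) 0 / 2) :=
            add_le_add key1 key2
        _ ≤ _ := hfin

theorem stmt_2 {α : Type*} [DecidableEq α] (S : Finset α) (p : α → ℝ)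
    (hp : ∀ j ∈ S, 0 ≤ p j) (A : Finset α) (hA : A ⊆ S) :
    (1 / (2 : ℝ) ^ S.card) *
        ∑ T ∈ S.powerset, max (∑ j ∈ T, p j) (∑ j ∈ S \ T, p j) ≤
      (3 / 2) * max (∑ j ∈ A, p j) (∑ j ∈ S \ A, p j) := by
  set P := ∑ j ∈ S, p j with hPdef
  set M := max (∑ j ∈ A, p j) (∑ j ∈ S \ A, p j) with hMdef
  have hsplitA : (∑ j ∈ S \ A, p j) = P - ∑ j ∈ A, p j := Finset.sum_sdiff_eq_sub hA
  have hA0 : 0 ≤ ∑ j ∈ A, p j := Finset.sum_nonneg (fun j hj => hp j (hA hj))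
  have hM0 : 0 ≤ M := le_trans hA0 (le_max_left _ _)
  have hPM : P ≤ 2 * M := by
    have h1 : (∑ j ∈ A, p j) ≤ M := le_max_left _ _
    have h2 : (∑ j ∈ S \ A, p j) ≤ M := le_max_right _ _
    rw [hsplitA] at h2
    linarith
  have hMj : ∀ j ∈ S, p j ≤ M := by
    intro j hj
    by_cases hjA : j ∈ A
    · exact le_trans (Finset.single_le_sum (fun i hi => hp i (hA hi)) hjA)
        (le_max_left _ _)
    · have hjSA : j ∈ S \ A := Finset.mem_sdiff.mpr ⟨hj, hjA⟩
      exact le_trans (Finset.single_le_sum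
        (fun i hi => hp i (Finset.mem_sdiff.mp hi).1) hjSA) (le_max_right _ _)
  have hc0 : (0:ℝ) ≤ 2 * M - P := by linarith
  -- bound on the absolute-deviation sum
  have hE : ∑ T ∈ S.powerset, |2 * ∑ j ∈ T, p j - P| ≤ 2 ^ S.card * (3 * M - P) := by
    have e0 : ∑ T ∈ S.powerset, |2 * ∑ j ∈ T, p j - P| =
        ∑ T ∈ S.powerset, max |2 * ∑ j ∈ T, p j - P| |(0:ℝ)| := by
      apply Finset.sum_congr rfl; intro T _
      rw [abs_zero, max_eq_left (abs_nonneg _)]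
    have e1 : ∑ T ∈ S.powerset, max |2 * ∑ j ∈ T, p j - P| |(0:ℝ)| ≤
        ∑ T ∈ S.powerset, max |2 * ∑ j ∈ T, p j - P| |2 * M - P| := by
      apply Finset.sum_le_sum
      intro T _
      exact max_le_max le_rfl (by rw [abs_zero]; exact abs_nonneg _)
    have e2 : ∑ T ∈ S.powerset, max |2 * ∑ j ∈ T, p j - P| |2 * M - P| =
        ∑ T ∈ S.powerset, |2 * ∑ j ∈ T, p j - P + (2 * M - P)| := (Lmax S p _).symm
    have e3 : ∑ T ∈ S.powerset, |2 * ∑ j ∈ T, p j - P + (2 * M - P)| ≤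
        2 ^ S.card * ((2 * M - P) + max (P - (2 * M - P)) 0 / 2) := by
      apply ML p S hp (2 * M - P) hc0
      intro j hj
      have := hMj j hj
      linarith
    have e4 : (2 * M - P) + max (P - (2 * M - P)) 0 / 2 ≤ 3 * M - P := by
      rcases max_cases (P - (2 * M - P)) (0:ℝ) with ⟨h, h'⟩ | ⟨h, h'⟩ <;>
        rw [h] <;> linarith
    calc ∑ T ∈ S.powerset, |2 * ∑ j ∈ T, p j - P|
        = ∑ T ∈ S.powerset, max |2 * ∑ j ∈ T, p j - P| |(0:ℝ)| := e0
      _ ≤ ∑ T ∈ S.powerset, max |2 * ∑ j ∈ T, p j - P| |2 * M - P| := e1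
      _ = ∑ T ∈ S.powerset, |2 * ∑ j ∈ T, p j - P + (2 * M - P)| := e2
      _ ≤ 2 ^ S.card * ((2 * M - P) + max (P - (2 * M - P)) 0 / 2) := e3
      _ ≤ 2 ^ S.card * (3 * M - P) := by
          apply mul_le_mul_of_nonneg_left e4 (by positivity)
  -- rewrite each max term
  have hsum : ∑ T ∈ S.powerset, max (∑ j ∈ T, p j) (∑ j ∈ S \ T, p j) =
      (2 ^ S.card * P + ∑ T ∈ S.powerset, |2 * ∑ j ∈ T, p j - P|) / 2 := by
    have e : ∀ T ∈ S.powerset, max (∑ j ∈ T, p j) (∑ j ∈ S \ T, p j) =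
        (P + |2 * ∑ j ∈ T, p j - P|) / 2 := by
      intro T hT
      have hTS : T ⊆ S := Finset.mem_powerset.mp hT
      rw [Finset.sum_sdiff_eq_sub hTS, ← hPdef]
      rcases le_total (2 * ∑ j ∈ T, p j - P) 0 with h | h
      · rw [abs_of_nonpos h, max_eq_right (by linarith)]; ring
      · rw [abs_of_nonneg h, max_eq_left (by linarith)]; ring
    rw [Finset.sum_congr rfl e]
    rw [← Finset.sum_div, Finset.sum_add_distrib, Finset.sum_const,
      Finset.card_powerset, nsmul_eq_mul]
    push_cast
    ring
  have h2n : (0:ℝ) < 2 ^ S.card := by positivity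
  rw [hsum, div_mul_eq_mul_div, one_mul, div_le_iff₀ h2n] at *
  nlinarith [hE, h2n.le, hM0]
end

section
/- Let J be a finite set, p : J → ℝ with p j ≥ 0 for all j, and let S₁, …, S_k be subsets of J (the scenarios); write p(T) = Σ_{j ∈ T} p j. Then for every subset A ⊆ J, (1 / 2^{|J|}) · Σ_{T ⊆ J} Σ_{i=1}^{k} max(p(T ∩ S_i), p(S_i \ T)) ≤ (3/2) · Σ_{i=1}^{k} max(p(A ∩ S_i), p(S_i \ A)). -/
open Finset
open scoped symmDiff

private lemma max_eq_half (a b : ℝ) : max a b = (a + b + |a - b|) / 2 := by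
  rcases le_total a b with h | h
  · rw [max_eq_right h, abs_of_nonpos (by linarith)]; ring
  · rw [max_eq_left h, abs_of_nonneg (by linarith)]; ring

private lemma abs_combo {a b M : ℝ} (ha : |a| ≤ M) (hb : |b| ≤ M) :
    |a + b| + |a - b| ≤ 2 * M := by
  rw [abs_le] at ha hb
  rcases abs_cases (a + b) with ⟨h1, _⟩ | ⟨h1, _⟩ <;>
    rcases abs_cases (a - b) with ⟨h2, _⟩ | ⟨h2, _⟩ <;> linarith [ha.1, ha.2, hb.1, hb.2]

private lemma key {α : Type*} [DecidableEq α] (J : Finset α) (p : α → ℝ)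
    (hp : ∀ j ∈ J, 0 ≤ p j) (S : Finset α) (hS : S ⊆ J) (A : Finset α) :
    ∑ T ∈ J.powerset, max (∑ j ∈ T ∩ S, p j) (∑ j ∈ S \ T, p j) ≤
      2 ^ J.card * ((3 / 2) * max (∑ j ∈ A ∩ S, p j) (∑ j ∈ S \ A, p j)) := by
  have hpS : ∀ j ∈ S, 0 ≤ p j := fun j hj => hp j (hS hj)
  set B : Finset α := S ∩ A with hBdef
  set C : Finset α := S \ A with hCdef
  have hAB : A ∩ S = B := inter_comm A S
  have hBS : B ⊆ S := inter_subset_left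
  have hCS : C ⊆ S := sdiff_subset
  have hBC : Disjoint B C := disjoint_left.mpr fun j hj1 hj2 =>
    (mem_sdiff.mp hj2).2 (mem_inter.mp hj1).2
  have hBCd : ∀ j, j ∈ B → j ∉ C := fun j hj => disjoint_left.mp hBC hj
  have hBCS : B ∪ C = S := sup_inf_sdiff S A
  set M : ℝ := max (∑ j ∈ B, p j) (∑ j ∈ C, p j) with hMdef
  have hpB : (0:ℝ) ≤ ∑ j ∈ B, p j := sum_nonneg fun j hj => hpS j (hBS hj)
  have hpC : (0:ℝ) ≤ ∑ j ∈ C, p j := sum_nonneg fun j hj => hpS j (hCS hj)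
  have hM0 : (0:ℝ) ≤ M := le_trans hpB (le_max_left _ _)
  have hSsum : (∑ j ∈ S, p j) = (∑ j ∈ B, p j) + (∑ j ∈ C, p j) := by
    rw [← sum_union hBC, hBCS]
  -- decomposition for arbitrary T
  have hx : ∀ T : Finset α, (∑ j ∈ T ∩ S, p j) = (∑ j ∈ T ∩ B, p j) + (∑ j ∈ T ∩ C, p j) := by
    intro T
    rw [← sum_union (hBC.mono inter_subset_right inter_subset_right), ← inter_union_distrib_left,
      hBCS]
  have hy : ∀ T : Finset α, (∑ j ∈ S \ T, p j) = (∑ j ∈ B \ T, p j) + (∑ j ∈ C \ T, p j) := by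
    intro T
    rw [← sum_union (hBC.mono sdiff_subset sdiff_subset), ← union_sdiff_distrib, hBCS]
  -- bounds on the differences
  have habsB : ∀ T : Finset α, |(∑ j ∈ T ∩ B, p j) - (∑ j ∈ B \ T, p j)| ≤ M := by
    intro T
    have h1 : (∑ j ∈ T ∩ B, p j) ≤ ∑ j ∈ B, p j :=
      sum_le_sum_of_subset_of_nonneg inter_subset_right (fun j hj _ => hpS j (hBS hj))
    have h2 : (∑ j ∈ B \ T, p j) ≤ ∑ j ∈ B, p j :=
      sum_le_sum_of_subset_of_nonneg sdiff_subset (fun j hj _ => hpS j (hBS hj))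
    have h3 : (0:ℝ) ≤ ∑ j ∈ T ∩ B, p j :=
      sum_nonneg fun j hj => hpS j (hBS (mem_inter.mp hj).2)
    have h4 : (0:ℝ) ≤ ∑ j ∈ B \ T, p j :=
      sum_nonneg fun j hj => hpS j (hBS (mem_sdiff.mp hj).1)
    have h5 : (∑ j ∈ B, p j) ≤ M := le_max_left _ _
    rw [abs_le]; constructor <;> linarith
  have habsC : ∀ T : Finset α, |(∑ j ∈ T ∩ C, p j) - (∑ j ∈ C \ T, p j)| ≤ M := by
    intro T
    have h1 : (∑ j ∈ T ∩ C, p j) ≤ ∑ j ∈ C, p j :=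
      sum_le_sum_of_subset_of_nonneg inter_subset_right (fun j hj _ => hpS j (hCS hj))
    have h2 : (∑ j ∈ C \ T, p j) ≤ ∑ j ∈ C, p j :=
      sum_le_sum_of_subset_of_nonneg sdiff_subset (fun j hj _ => hpS j (hCS hj))
    have h3 : (0:ℝ) ≤ ∑ j ∈ T ∩ C, p j :=
      sum_nonneg fun j hj => hpS j (hCS (mem_inter.mp hj).2)
    have h4 : (0:ℝ) ≤ ∑ j ∈ C \ T, p j :=
      sum_nonneg fun j hj => hpS j (hCS (mem_sdiff.mp hj).1)
    have h5 : (∑ j ∈ C, p j) ≤ M := le_max_right _ _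
    rw [abs_le]; constructor <;> linarith
  -- symmDiff identities
  have hTB : ∀ T : Finset α, (T ∆ C) ∩ B = T ∩ B := by
    intro T; ext j
    simp only [mem_inter, Finset.mem_symmDiff]
    constructor
    · rintro ⟨h1 | h1, h2⟩
      · exact ⟨h1.1, h2⟩
      · exact absurd h1.1 (fun h => hBCd j h2 h)
    · rintro ⟨h1, h2⟩
      exact ⟨Or.inl ⟨h1, hBCd j h2⟩, h2⟩
  have hBT : ∀ T : Finset α, B \ (T ∆ C) = B \ T := by
    intro T; ext j
    simp only [mem_sdiff, Finset.mem_symmDiff]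
    constructor
    · rintro ⟨h1, h2⟩
      refine ⟨h1, fun hjT => h2 (Or.inl ⟨hjT, hBCd j h1⟩)⟩
    · rintro ⟨h1, h2⟩
      refine ⟨h1, fun h => ?_⟩
      rcases h with h | h
      · exact h2 h.1
      · exact hBCd j h1 h.1
  have hTC : ∀ T : Finset α, (T ∆ C) ∩ C = C \ T := by
    intro T; ext j
    simp only [mem_inter, mem_sdiff, Finset.mem_symmDiff]
    constructor
    · rintro ⟨h1 | h1, h2⟩
      · exact absurd h2 h1.2
      · exact ⟨h2, h1.2⟩
    · rintro ⟨h1, h2⟩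
      exact ⟨Or.inr ⟨h1, h2⟩, h1⟩
  have hCT : ∀ T : Finset α, C \ (T ∆ C) = T ∩ C := by
    intro T; ext j
    simp only [mem_inter, mem_sdiff, Finset.mem_symmDiff]
    constructor
    · rintro ⟨h1, h2⟩
      refine ⟨by_contra fun hT => h2 (Or.inr ⟨h1, hT⟩), h1⟩
    · rintro ⟨h1, h2⟩
      refine ⟨h2, fun h => ?_⟩
      rcases h with h | h
      · exact h.2 h2
      · exact h.2 h1
  -- pointwise bound
  have hptwise : ∀ T : Finset α,
      |(∑ j ∈ T ∩ S, p j) - (∑ j ∈ S \ T, p j)| +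
        |(∑ j ∈ (T ∆ C) ∩ S, p j) - (∑ j ∈ S \ (T ∆ C), p j)| ≤ 2 * M := by
    intro T
    have e1 : (∑ j ∈ T ∩ S, p j) - (∑ j ∈ S \ T, p j) =
        ((∑ j ∈ T ∩ B, p j) - (∑ j ∈ B \ T, p j)) +
          ((∑ j ∈ T ∩ C, p j) - (∑ j ∈ C \ T, p j)) := by
      rw [hx T, hy T]; ring
    have e2 : (∑ j ∈ (T ∆ C) ∩ S, p j) - (∑ j ∈ S \ (T ∆ C), p j) =
        ((∑ j ∈ T ∩ B, p j) - (∑ j ∈ B \ T, p j)) -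
          ((∑ j ∈ T ∩ C, p j) - (∑ j ∈ C \ T, p j)) := by
      rw [hx (T ∆ C), hy (T ∆ C), hTB T, hBT T, hTC T, hCT T]; ring
    rw [e1, e2]
    exact abs_combo (habsB T) (habsC T)
  -- reindexing sum by T ↦ T ∆ C
  have hCJ : C ⊆ J := hCS.trans hS
  have hre : ∑ T ∈ J.powerset, |(∑ j ∈ (T ∆ C) ∩ S, p j) - (∑ j ∈ S \ (T ∆ C), p j)| =
      ∑ T ∈ J.powerset, |(∑ j ∈ T ∩ S, p j) - (∑ j ∈ S \ T, p j)| := by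
    have hmemP : ∀ T ∈ J.powerset, T ∆ C ∈ J.powerset := by
      intro T hT
      rw [mem_powerset] at *
      intro j hj
      rcases Finset.mem_symmDiff.mp hj with ⟨h, _⟩ | ⟨h, _⟩
      · exact hT h
      · exact hCJ h
    refine sum_nbij' (fun T => T ∆ C) (fun T => T ∆ C) hmemP hmemP ?_ ?_ ?_
    · intro T _; exact symmDiff_symmDiff_cancel_right C T
    · intro T _; exact symmDiff_symmDiff_cancel_right C T
    · intro T _; rfl
  -- the sum of absolute differences
  have hG : ∑ T ∈ J.powerset, |(∑ j ∈ T ∩ S, p j) - (∑ j ∈ S \ T, p j)| ≤ 2 ^ J.card * M := by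
    have hsplit : ∑ T ∈ J.powerset, (|(∑ j ∈ T ∩ S, p j) - (∑ j ∈ S \ T, p j)| +
          |(∑ j ∈ (T ∆ C) ∩ S, p j) - (∑ j ∈ S \ (T ∆ C), p j)|) ≤
        ∑ T ∈ J.powerset, 2 * M := sum_le_sum fun T _ => hptwise T
    rw [sum_add_distrib, hre, sum_const, card_powerset, nsmul_eq_mul] at hsplit
    push_cast at hsplit
    linarith
  -- rewrite max via abs
  have hmax : ∑ T ∈ J.powerset, max (∑ j ∈ T ∩ S, p j) (∑ j ∈ S \ T, p j) =
      ∑ T ∈ J.powerset, (((∑ j ∈ B, p j) + (∑ j ∈ C, p j)) +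
        |(∑ j ∈ T ∩ S, p j) - (∑ j ∈ S \ T, p j)|) / 2 := by
    refine sum_congr rfl fun T _ => ?_
    rw [max_eq_half]
    have hd : Disjoint (T ∩ S) (S \ T) :=
      disjoint_left.mpr fun j h1 h2 => (mem_sdiff.mp h2).2 (mem_inter.mp h1).1
    have hu : T ∩ S ∪ S \ T = S := by rw [inter_comm]; exact sup_inf_sdiff S T
    have e : (∑ j ∈ T ∩ S, p j) + (∑ j ∈ S \ T, p j) =
        (∑ j ∈ B, p j) + (∑ j ∈ C, p j) := by
      rw [← sum_union hd, hu, hSsum]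
    rw [e]
  rw [hmax, hAB]
  have hcard : ∑ T ∈ J.powerset,
      (((∑ j ∈ B, p j) + (∑ j ∈ C, p j)) +
        |(∑ j ∈ T ∩ S, p j) - (∑ j ∈ S \ T, p j)|) / 2 =
      (2 ^ J.card * ((∑ j ∈ B, p j) + (∑ j ∈ C, p j)) +
        ∑ T ∈ J.powerset, |(∑ j ∈ T ∩ S, p j) - (∑ j ∈ S \ T, p j)|) / 2 := by
    rw [← sum_div, sum_add_distrib, sum_const, card_powerset, nsmul_eq_mul]
    push_cast; ring
  rw [hcard]
  have hBM : (∑ j ∈ B, p j) ≤ M := le_max_left _ _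
  have hCM : (∑ j ∈ C, p j) ≤ M := le_max_right _ _
  have hpow : (0:ℝ) ≤ 2 ^ J.card := by positivity
  nlinarith [hG, mul_le_mul_of_nonneg_left hBM hpow, mul_le_mul_of_nonneg_left hCM hpow]

theorem stmt_3 {α : Type*} [DecidableEq α] (J : Finset α) (p : α → ℝ)
    (hp : ∀ j ∈ J, 0 ≤ p j) (k : ℕ) (S : Fin k → Finset α)
    (hS : ∀ i, S i ⊆ J) (A : Finset α) (hA : A ⊆ J) :
    (1 / (2 : ℝ) ^ J.card) *
        ∑ T ∈ J.powerset, ∑ i : Fin k,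
          max (∑ j ∈ T ∩ S i, p j) (∑ j ∈ S i \ T, p j) ≤
      (3 / 2) * ∑ i : Fin k, max (∑ j ∈ A ∩ S i, p j) (∑ j ∈ S i \ A, p j) := by
  rw [Finset.sum_comm]
  have h1 : ∑ i : Fin k, ∑ T ∈ J.powerset,
      max (∑ j ∈ T ∩ S i, p j) (∑ j ∈ S i \ T, p j) ≤
      ∑ i : Fin k, 2 ^ J.card * ((3 / 2) * max (∑ j ∈ A ∩ S i, p j) (∑ j ∈ S i \ A, p j)) :=
    Finset.sum_le_sum fun i _ => key J p hp (S i) (hS i) A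
  rw [← Finset.mul_sum, ← Finset.mul_sum] at h1
  have hpow : (0:ℝ) < 2 ^ J.card := by positivity
  calc (1 / (2 : ℝ) ^ J.card) * ∑ i : Fin k, ∑ T ∈ J.powerset,
        max (∑ j ∈ T ∩ S i, p j) (∑ j ∈ S i \ T, p j)
      ≤ (1 / (2 : ℝ) ^ J.card) * (2 ^ J.card * ((3 / 2) *
          ∑ i : Fin k, max (∑ j ∈ A ∩ S i, p j) (∑ j ∈ S i \ A, p j))) := by
        apply mul_le_mul_of_nonneg_left h1 (by positivity)
    _ = (3 / 2) * ∑ i : Fin k, max (∑ j ∈ A ∩ S i, p j) (∑ j ∈ S i \ A, p j) := by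
        field_simp
end

section
/- Let J be a finite set, p : J → ℝ with p j ≥ 0 for all j, and let S₁, …, S_k ⊆ J be scenarios such that each S_i consists of exactly two distinct jobs and every job of J belongs to at least one scenario. Then for every subset A ⊆ J, max_{1 ≤ i ≤ k} max(p(A ∩ S_i), p(S_i \ A)) equals the maximum of (i) max_{j ∈ J} p j and (ii) the maximum of p(S_i) over those scenarios S_i that are monochromatic under A (i.e., S_i ⊆ A or S_i ∩ A = ∅), where the maximum over an empty collection in (ii) is taken to be 0. -/
theorem stmt_5 {α : Type*} [DecidableEq α] (J : Finset α) (p : α → ℝ)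
    (hp : ∀ j ∈ J, 0 ≤ p j) (k : ℕ) (hk : 0 < k) (S : Fin k → Finset α)
    (hcard : ∀ i, (S i).card = 2) (hSJ : ∀ i, S i ⊆ J)
    (hcov : ∀ j ∈ J, ∃ i, j ∈ S i) (A : Finset α) (hA : A ⊆ J) :
    (⨆ i : Fin k, max (∑ j ∈ A ∩ S i, p j) (∑ j ∈ S i \ A, p j)) =
      max (⨆ j ∈ J, p j)
        (⨆ i ∈ {i : Fin k | S i ⊆ A ∨ S i ∩ A = ∅}, ∑ j ∈ S i, p j) := by
  have i0 : Fin k := ⟨0, hk⟩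
  have hJne : J.Nonempty := by
    obtain ⟨a, ha⟩ := Finset.card_pos.mp (by rw [hcard i0]; norm_num : 0 < (S i0).card)
    exact ⟨a, hSJ i0 ha⟩
  set f : Fin k → ℝ := fun i => max (∑ j ∈ A ∩ S i, p j) (∑ j ∈ S i \ A, p j) with hf
  have hsum_nn : ∀ (s : Finset α), s ⊆ J → 0 ≤ ∑ j ∈ s, p j := fun s hs =>
    Finset.sum_nonneg fun j hj => hp j (hs hj)
  have hfnn : ∀ i, 0 ≤ f i := fun i =>
    le_trans (hsum_nn _ (le_trans (Finset.inter_subset_right) (hSJ i))) (le_max_left _ _)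
  have hbddL : BddAbove (Set.range f) := (Set.finite_range f).bddAbove
  have hLnn : 0 ≤ ⨆ i, f i := le_trans (hfnn i0) (le_ciSup hbddL i0)
  have hbdd1 : BddAbove (Set.range fun j => ⨆ _ : j ∈ J, p j) := by
    refine ⟨J.sup' hJne p ⊔ 0, ?_⟩
    rintro _ ⟨j, rfl⟩
    exact Real.iSup_le (fun hj => le_sup_of_le_left (Finset.le_sup' p hj)) le_sup_right
  have hpR1 : ∀ j ∈ J, p j ≤ ⨆ j ∈ J, p j := fun j hj =>
    le_ciSup_of_le hbdd1 j (ciSup_pos (f := fun _ : j ∈ J => p j) hj).ge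
  have hR1nn : 0 ≤ ⨆ j ∈ J, p j := by
    obtain ⟨j0, hj0⟩ := hJne
    exact le_trans (hp j0 hj0) (hpR1 j0 hj0)
  set g2 : Fin k → ℝ := fun i =>
    ⨆ _ : i ∈ {i : Fin k | S i ⊆ A ∨ S i ∩ A = ∅}, ∑ j ∈ S i, p j with hg2
  have hbdd2 : BddAbove (Set.range g2) := (Set.finite_range g2).bddAbove
  have hR2 : ∀ i, (S i ⊆ A ∨ S i ∩ A = ∅) → ∑ j ∈ S i, p j ≤ ⨆ i, g2 i := fun i hi =>
    le_ciSup_of_le hbdd2 i (ciSup_pos (f := fun _ : i ∈ {i : Fin k | S i ⊆ A ∨ S i ∩ A = ∅} => ∑ j ∈ S i, p j) hi).ge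
  have hRnn : (0 : ℝ) ≤ max (⨆ j ∈ J, p j) (⨆ i, g2 i) := le_trans hR1nn (le_max_left _ _)
  apply le_antisymm
  · refine Real.iSup_le (fun i => ?_) hRnn
    by_cases h1 : S i ⊆ A
    · have e1 : A ∩ S i = S i := Finset.inter_eq_right.mpr h1
      have e2 : S i \ A = ∅ := Finset.sdiff_eq_empty_iff_subset.mpr h1
      show max _ _ ≤ _
      rw [e1, e2]
      refine max_le (le_trans (hR2 i (Or.inl h1)) (le_max_right _ _)) (by simpa using hRnn)
    · by_cases h2 : S i ∩ A = ∅
      · have e1 : A ∩ S i = ∅ := by rwa [Finset.inter_comm]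
        have e2 : S i \ A = S i := Finset.sdiff_eq_self_iff_disjoint.mpr
          (Finset.disjoint_iff_inter_eq_empty.mpr h2)
        show max _ _ ≤ _
        rw [e1, e2]
        refine max_le (by simpa using hRnn) (le_trans (hR2 i (Or.inr h2)) (le_max_right _ _))
      · have hpart : (S i ∩ A).card + (S i \ A).card = 2 := by
          rw [Finset.card_inter_add_card_sdiff, hcard]
        have hn1 : 0 < (S i ∩ A).card := Finset.card_pos.mpr
          (Finset.nonempty_iff_ne_empty.mpr h2)
        have hn2 : 0 < (S i \ A).card := Finset.card_pos.mpr
          (Finset.sdiff_nonempty.mpr h1)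
        obtain ⟨a, ha⟩ := Finset.card_eq_one.mp (by omega : (S i ∩ A).card = 1)
        obtain ⟨b, hb⟩ := Finset.card_eq_one.mp (by omega : (S i \ A).card = 1)
        have haS : a ∈ S i ∩ A := ha ▸ Finset.mem_singleton_self a
        have hbS : b ∈ S i \ A := hb ▸ Finset.mem_singleton_self b
        have haJ : a ∈ J := hSJ i (Finset.mem_of_mem_inter_left haS)
        have hbJ : b ∈ J := hSJ i (Finset.mem_sdiff.mp hbS).1
        have e1 : A ∩ S i = {a} := by rw [Finset.inter_comm]; exact ha
        show max _ _ ≤ _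
        rw [e1, hb, Finset.sum_singleton, Finset.sum_singleton]
        exact max_le (le_trans (hpR1 a haJ) (le_max_left _ _))
          (le_trans (hpR1 b hbJ) (le_max_left _ _))
  · refine max_le ?_ ?_
    · refine Real.iSup_le (fun j => Real.iSup_le (fun hj => ?_) hLnn) hLnn
      obtain ⟨i, hji⟩ := hcov j hj
      refine le_trans ?_ (le_ciSup hbddL i)
      by_cases hjA : j ∈ A
      · refine le_trans ?_ (le_max_left _ _)
        exact Finset.single_le_sum (fun x hx => hp x (hSJ i (Finset.mem_of_mem_inter_right hx)))
          (Finset.mem_inter.mpr ⟨hjA, hji⟩)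
      · refine le_trans ?_ (le_max_right _ _)
        exact Finset.single_le_sum (fun x hx => hp x (hSJ i (Finset.mem_sdiff.mp hx).1))
          (Finset.mem_sdiff.mpr ⟨hji, hjA⟩)
    · refine Real.iSup_le (fun i => Real.iSup_le (fun hi => ?_) hLnn) hLnn
      refine le_trans ?_ (le_ciSup hbddL i)
      rcases hi with h1 | h2
      · have e1 : A ∩ S i = S i := Finset.inter_eq_right.mpr h1
        rw [← e1]
        exact le_max_left _ _
      · have e2 : S i \ A = S i := Finset.sdiff_eq_self_iff_disjoint.mpr
          (Finset.disjoint_iff_inter_eq_empty.mpr h2)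
        rw [← e2]
        exact le_max_right _ _
end

section
/- Let J be a finite set, p : J → ℝ with p j ≥ 0 for all j, and let 𝒮 be a family of two-element subsets of J (the scenarios). Suppose j₀, j₁, …, j_{m} is a closed walk with j_m = j₀, m odd, and {j_l, j_{l+1}} ∈ 𝒮 for each 0 ≤ l < m. Then for every subset A ⊆ J there exists an index l with either {j_l, j_{l+1}} ⊆ A or {j_l, j_{l+1}} ∩ A = ∅; consequently, max_{S ∈ 𝒮} max(p(A ∩ S), p(S \ A)) ≥ min_{0 ≤ l < m} (p(j_l) + p(j_{l+1})). -/
/-!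
Colour each job by whether it lies in `A`. Along a walk whose consecutive jobs always have
different colours, the colour flips at every step, so after an odd number of steps it differs
from the starting colour; a closed odd walk therefore has a monochromatic edge `{j l, j (l + 1)}`.
That scenario lies entirely on one machine, so its makespan is at least `p (j l) + p (j (l + 1))`.
-/

theorem Finset.le_ciSup₂_of_mem {ι β : Type*} [ConditionallyCompleteLattice β] {s : Finset ι}
    (f : ι → β) {i : ι} (hi : i ∈ s) : f i ≤ ⨆ x ∈ s, f x :=
  le_ciSup₂ (f := fun x (_ : x ∈ s) => f x)
    ((s.finite_toSet.image f).bddAbove.mono <| by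
      rintro _ ⟨_, ⟨x, rfl⟩, hx, rfl⟩
      exact Set.mem_image_of_mem f hx) i hi

theorem Bool.exists_eq_succ_of_odd {m : ℕ} (hm : Odd m) (f : ℕ → Bool) (hf : f m = f 0) :
    ∃ l < m, f (l + 1) = f l := by
  by_contra! hflip
  have hparity : ∀ l ≤ m, f l = (f 0 ^^ decide (Odd l)) := by
    intro l hl
    induction l with
    | zero => simp
    | succ l ih =>
      simp [Bool.eq_not_of_ne (hflip l hl), ih (by omega), Nat.odd_add_one,
        ← Nat.not_even_iff_odd]
  simpa [hm, hf] using hparity m le_rfl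

theorem Finset.pair_subset_or_pair_inter_eq_empty {α : Type*} [DecidableEq α] {a b : α}
    {A : Finset α} (h : a ∈ A ↔ b ∈ A) : {a, b} ⊆ A ∨ {a, b} ∩ A = ∅ := by
  by_cases ha : a ∈ A
  · exact .inl (Finset.insert_subset ha (Finset.singleton_subset_iff.2 (h.1 ha)))
  · refine .inr (Finset.eq_empty_of_forall_notMem fun x hx => ?_)
    simp only [Finset.mem_inter, Finset.mem_insert, Finset.mem_singleton] at hx
    rcases hx with ⟨rfl | rfl, hxA⟩ <;> tauto

theorem Finset.sum_le_max_sum_inter_sum_sdiff {α M : Type*} [DecidableEq α]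
    [AddCommMonoid M] [LinearOrder M] {S A : Finset α} (p : α → M)
    (h : S ⊆ A ∨ S ∩ A = ∅) : ∑ x ∈ S, p x ≤ max (∑ x ∈ A ∩ S, p x) (∑ x ∈ S \ A, p x) := by
  rcases h with hsub | hdisj
  · rw [Finset.inter_eq_right.2 hsub]
    exact le_max_left _ _
  · rw [Finset.sdiff_eq_self_of_disjoint (Finset.disjoint_iff_inter_eq_empty.2 hdisj)]
    exact le_max_right _ _

theorem stmt_6_general {α : Type*} [DecidableEq α] (J : Finset α) (p : α → ℝ)
    (𝒮 : Finset (Finset α))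
    (h𝒮 : ∀ S ∈ 𝒮, S.card = 2 ∧ S ⊆ J)
    (m : ℕ) (hm : Odd m) (j : ℕ → α) (hclosed : j m = j 0)
    (hwalk : ∀ l < m, ({j l, j (l + 1)} : Finset α) ∈ 𝒮)
    (A : Finset α) :
    (∃ l < m, ({j l, j (l + 1)} : Finset α) ⊆ A ∨
        ({j l, j (l + 1)} : Finset α) ∩ A = ∅) ∧
      (⨆ S ∈ 𝒮, max (∑ x ∈ A ∩ S, p x) (∑ x ∈ S \ A, p x)) ≥
        ⨅ l : Fin m, (p (j l) + p (j (l + 1))) := by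
  obtain ⟨l, hl, hsame⟩ :=
    Bool.exists_eq_succ_of_odd hm (fun l => decide (j l ∈ A)) (by simp only [hclosed])
  have hmono := Finset.pair_subset_or_pair_inter_eq_empty (a := j l) (b := j (l + 1)) (A := A)
    (by simpa using hsame.symm)
  refine ⟨⟨l, hl, hmono⟩, ?_⟩
  have hne : j l ≠ j (l + 1) := Finset.card_pair_eq_two_iff.mp (h𝒮 _ (hwalk l hl)).1
  calc ⨅ i : Fin m, (p (j i) + p (j (i + 1)))
      ≤ p (j l) + p (j (l + 1)) := ciInf_le (Finite.bddBelow_range _) (⟨l, hl⟩ : Fin m)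
    _ = ∑ x ∈ {j l, j (l + 1)}, p x := (Finset.sum_pair hne).symm
    _ ≤ max (∑ x ∈ A ∩ {j l, j (l + 1)}, p x) (∑ x ∈ {j l, j (l + 1)} \ A, p x) :=
      Finset.sum_le_max_sum_inter_sum_sdiff p hmono
    _ ≤ ⨆ S ∈ 𝒮, max (∑ x ∈ A ∩ S, p x) (∑ x ∈ S \ A, p x) :=
      Finset.le_ciSup₂_of_mem (fun S => max (∑ x ∈ A ∩ S, p x) (∑ x ∈ S \ A, p x))
        (hwalk l hl)

theorem stmt_6 {α : Type*} [DecidableEq α] (J : Finset α) (p : α → ℝ)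
    (hp : ∀ j ∈ J, 0 ≤ p j) (𝒮 : Finset (Finset α))
    (h𝒮 : ∀ S ∈ 𝒮, S.card = 2 ∧ S ⊆ J)
    (m : ℕ) (hm : Odd m) (j : ℕ → α) (hclosed : j m = j 0)
    (hwalk : ∀ l < m, ({j l, j (l + 1)} : Finset α) ∈ 𝒮)
    (A : Finset α) (hA : A ⊆ J) :
    (∃ l < m, ({j l, j (l + 1)} : Finset α) ⊆ A ∨
        ({j l, j (l + 1)} : Finset α) ∩ A = ∅) ∧
      (⨆ S ∈ 𝒮, max (∑ x ∈ A ∩ S, p x) (∑ x ∈ S \ A, p x)) ≥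
        ⨅ l : Fin m, (p (j l) + p (j (l + 1))) :=
  stmt_6_general J p 𝒮 h𝒮 m hm j hclosed hwalk A
end

section
/- Let J be a finite set, p : J → ℝ with p j ≥ 0 for all j, let 𝒮 be a family of two-element subsets of J, and let W ∈ ℝ. Suppose that every closed walk j₀, j₁, …, j_m = j₀ of odd length m with {j_l, j_{l+1}} ∈ 𝒮 for all 0 ≤ l < m contains an index l with p(j_l) + p(j_{l+1}) ≤ W. Then there exists a subset A ⊆ J such that every scenario S ∈ 𝒮 with S ⊆ A or S ∩ A = ∅ satisfies p(S) ≤ W, i.e., every monochromatic scenario has total processing time at most W. -/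
namespace Stmt7Aux

variable {α : Type*} [DecidableEq α] (𝒮 : Finset (Finset α)) (p : α → ℝ) (W : ℝ)

def E (x y : α) : Prop := ({x, y} : Finset α) ∈ 𝒮 ∧ W < p x + p y

def Wk (n : ℕ) (x y : α) : Prop :=
  ∃ j : ℕ → α, j 0 = x ∧ j n = y ∧ ∀ l < n, E 𝒮 p W (j l) (j (l + 1))

variable {𝒮 p W}

lemma E_symm {x y : α} (h : E 𝒮 p W x y) : E 𝒮 p W y x := by
  obtain ⟨h1, h2⟩ := h
  exact ⟨by rwa [Finset.pair_comm], by linarith⟩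

lemma wk_refl (x : α) : Wk 𝒮 p W 0 x x := ⟨fun _ => x, rfl, rfl, by omega⟩

lemma wk_single {x y : α} (h : E 𝒮 p W x y) : Wk 𝒮 p W 1 x y := by
  refine ⟨fun l => if l = 0 then x else y, by simp, by simp, ?_⟩
  intro l hl
  interval_cases l
  simpa using h

lemma wk_symm {n : ℕ} {x y : α} (h : Wk 𝒮 p W n x y) : Wk 𝒮 p W n y x := by
  obtain ⟨j, h0, hn, he⟩ := h
  refine ⟨fun l => j (n - l), by simpa, by simpa, ?_⟩
  intro l hl
  have h1 : n - (l + 1) < n := by omega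
  have h2 : n - (l + 1) + 1 = n - l := by omega
  have := E_symm (he _ h1)
  rwa [h2] at this

lemma wk_trans {m n : ℕ} {x y z : α} (h1 : Wk 𝒮 p W m x y) (h2 : Wk 𝒮 p W n y z) :
    Wk 𝒮 p W (m + n) x z := by
  obtain ⟨j, hj0, hjm, hje⟩ := h1
  obtain ⟨k, hk0, hkn, hke⟩ := h2
  refine ⟨fun l => if l < m then j l else k (l - m), ?_, ?_, ?_⟩
  · by_cases hm : 0 < m
    · simp [hm, hj0]
    · have hm0 : m = 0 := by omega
      subst hm0
      simp only [Nat.lt_irrefl, if_false, Nat.sub_zero, hk0]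
      rw [← hjm, hj0]
  · have h : ¬ (m + n < m) := by omega
    simp only [if_neg h, Nat.add_sub_cancel_left, hkn]
  · intro l hl
    rcases lt_trichotomy (l + 1) m with h | h | h
    · have hlm : l < m := by omega
      simpa only [if_pos hlm, if_pos h] using hje l hlm
    · have hlm : l < m := by omega
      have : k ((l + 1) - m) = j (l + 1) := by
        rw [h, Nat.sub_self, hk0, ← h, ← hjm, h]
      simp only [if_pos hlm, if_neg (by omega : ¬ (l + 1 < m)), this]
      exact hje l hlm
    · have hlm : ¬ (l < m) := by omega
      have h2 : l + 1 - m = (l - m) + 1 := by omega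
      simp only [if_neg hlm, if_neg (by omega : ¬ (l + 1 < m)), h2]
      exact hke (l - m) (by omega)

def reach : Setoid α :=
  ⟨fun x y => ∃ n, Wk 𝒮 p W n x y,
    fun x => ⟨0, wk_refl x⟩,
    fun ⟨n, h⟩ => ⟨n, wk_symm h⟩,
    fun ⟨m, h1⟩ ⟨n, h2⟩ => ⟨m + n, wk_trans h1 h2⟩⟩

end Stmt7Aux

open Stmt7Aux in
theorem stmt_7 {α : Type*} [DecidableEq α] (J : Finset α) (p : α → ℝ)
    (hp : ∀ j ∈ J, 0 ≤ p j) (𝒮 : Finset (Finset α))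
    (h𝒮 : ∀ S ∈ 𝒮, S.card = 2 ∧ S ⊆ J) (W : ℝ)
    (hodd : ∀ (m : ℕ), Odd m → ∀ j : ℕ → α, j m = j 0 →
        (∀ l < m, ({j l, j (l + 1)} : Finset α) ∈ 𝒮) →
        ∃ l < m, p (j l) + p (j (l + 1)) ≤ W) :
    ∃ A ⊆ J, ∀ S ∈ 𝒮, (S ⊆ A ∨ S ∩ A = ∅) → ∑ x ∈ S, p x ≤ W := by
  classical
  -- no odd closed walk
  have noodd : ∀ n x, Odd n → ¬ Wk 𝒮 p W n x x := by
    intro n x hn ⟨j, h0, hcl, he⟩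
    obtain ⟨l, hl, hle⟩ := hodd n hn j (by rw [h0, hcl]) (fun l hl => (he l hl).1)
    exact absurd hle (not_le.mpr (he l hl).2)
  set s : Setoid α := reach (𝒮 := 𝒮) (p := p) (W := W) with hs
  set rep : α → α := fun x => (Quotient.mk s x).out with hrepdef
  have hrep : ∀ x, ∃ n, Wk 𝒮 p W n (rep x) x := fun x =>
    Quotient.exact (Quotient.out_eq (Quotient.mk s x))
  have hrepeq : ∀ x y, (∃ n, Wk 𝒮 p W n x y) → rep x = rep y := fun x y h =>
    congrArg Quotient.out (Quotient.sound h)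
  set A : Finset α := J.filter (fun x => ∃ n, Even n ∧ Wk 𝒮 p W n (rep x) x) with hA
  refine ⟨A, Finset.filter_subset _ _, ?_⟩
  intro S hS hmono
  obtain ⟨hcard, hSJ⟩ := h𝒮 S hS
  obtain ⟨x, y, hxy, hSxy⟩ := Finset.card_eq_two.mp hcard
  subst hSxy
  rw [Finset.sum_pair hxy]
  by_contra hsum
  have hExy : E 𝒮 p W x y := ⟨hS, not_le.mp hsum⟩
  have hxJ : x ∈ J := hSJ (by simp)
  have hyJ : y ∈ J := hSJ (by simp)
  have hreq : rep x = rep y := hrepeq x y ⟨1, wk_single hExy⟩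
  -- walks from rep to x and y with parities
  rcases hmono with hsub | hdisj
  · -- both in A : even walks
    have hxA : x ∈ A := hsub (by simp)
    have hyA : y ∈ A := hsub (by simp)
    obtain ⟨n, hne, hwn⟩ := (Finset.mem_filter.mp hxA).2
    obtain ⟨m, hme, hwm⟩ := (Finset.mem_filter.mp hyA).2
    have : Wk 𝒮 p W (n + 1 + m) (rep x) (rep x) :=
      wk_trans (wk_trans hwn (wk_single hExy)) (hreq ▸ wk_symm hwm)
    refine noodd _ _ ?_ this
    rw [Nat.odd_iff]; rw [Nat.even_iff] at hne hme; omega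
  · -- both not in A : odd walks
    have hxA : x ∉ A := fun h => by
      have : x ∈ ({x, y} : Finset α) ∩ A := Finset.mem_inter.mpr ⟨by simp, h⟩
      rw [hdisj] at this; exact absurd this (Finset.notMem_empty x)
    have hyA : y ∉ A := fun h => by
      have : y ∈ ({x, y} : Finset α) ∩ A := Finset.mem_inter.mpr ⟨by simp, h⟩
      rw [hdisj] at this; exact absurd this (Finset.notMem_empty y)
    have hnx : ¬ ∃ n, Even n ∧ Wk 𝒮 p W n (rep x) x := fun h =>
      hxA (Finset.mem_filter.mpr ⟨hxJ, h⟩)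
    have hny : ¬ ∃ n, Even n ∧ Wk 𝒮 p W n (rep y) y := fun h =>
      hyA (Finset.mem_filter.mpr ⟨hyJ, h⟩)
    obtain ⟨n, hwn⟩ := hrep x
    obtain ⟨m, hwm⟩ := hrep y
    have hno : Odd n := by
      by_contra h
      exact hnx ⟨n, Nat.not_odd_iff_even.mp h, hwn⟩
    have hmo : Odd m := by
      by_contra h
      exact hny ⟨m, Nat.not_odd_iff_even.mp h, hwm⟩
    have : Wk 𝒮 p W (n + 1 + m) (rep x) (rep x) :=
      wk_trans (wk_trans hwn (wk_single hExy)) (hreq ▸ wk_symm hwm)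
    refine noodd _ _ ?_ this
    rw [Nat.odd_iff]; rw [Nat.odd_iff] at hno hmo; omega
end

section
/- Let S be a finite set with |S| ≥ 2, fix s₀ ∈ S, let 𝒫 = {B ⊆ S : s₀ ∈ B} and N = 2^{|S|−1}. Let p : S → ℝ with p j ≥ 0 for all j ∈ S, define m(B) = min(p(B), p(S \ B)) with p(T) = Σ_{j ∈ T} p j, and w(A) = (1/(N−1)) · Σ_{B ∈ 𝒫} m(B) − m(A) for A ∈ 𝒫. Then for every A ∈ 𝒫, w(A) ≥ −(1/4) · ((N−2)/(N−1)) · p(S). -/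
/-!
Write `m B` for the least load of the two-machine schedule that puts `B` on one machine and
`S \ B` on the other. Since `A = B ∆ (B ∆ A)` and the least load is subadditive under
symmetric difference, `m A ≤ m B + m (B ∆ A)`; averaging over all `B ⊆ S` (and `B ↦ B ∆ A`
permutes them) shows that the average least load is at least `m A / 2`. Each partition is
counted twice among the subsets of `S`, once by the side containing `s₀`, so the sum over `𝒫`
is at least `N · m A / 2`, and `m A ≤ p(S) / 2` turns this into the bound.
-/

open Finset
open scoped symmDiff

section MinLoad

variable {α : Type*} [DecidableEq α]

def minLoad (p : α → ℝ) (S B : Finset α) : ℝ :=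
  min (∑ j ∈ B, p j) (∑ j ∈ S \ B, p j)

lemma sum_le_sum_add_sum_of_subset_union {p : α → ℝ} {U V W : Finset α} (h : U ⊆ V ∪ W)
    (hp : ∀ j ∈ V ∪ W, 0 ≤ p j) :
    ∑ j ∈ U, p j ≤ ∑ j ∈ V, p j + ∑ j ∈ W, p j :=
  calc ∑ j ∈ U, p j ≤ ∑ j ∈ V ∪ W, p j :=
        sum_le_sum_of_subset_of_nonneg h fun j hj _ ↦ hp j hj
    _ ≤ ∑ j ∈ V ∪ W, p j + ∑ j ∈ V ∩ W, p j :=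
      le_add_of_nonneg_right <| sum_nonneg fun j hj ↦ hp j (inter_subset_union hj)
    _ = ∑ j ∈ V, p j + ∑ j ∈ W, p j := sum_union_inter

variable {p : α → ℝ} {S : Finset α}

lemma minLoad_sdiff {B : Finset α} (hB : B ⊆ S) : minLoad p S (S \ B) = minLoad p S B := by
  rw [minLoad, minLoad, Finset.sdiff_sdiff_eq_self hB, min_comm]

lemma minLoad_le_half {B : Finset α} (hB : B ⊆ S) :
    minLoad p S B ≤ (∑ j ∈ S, p j) / 2 := by
  have hsplit := sum_sdiff hB (f := p)
  rw [minLoad]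
  linarith [min_le_left (∑ j ∈ B, p j) (∑ j ∈ S \ B, p j),
    min_le_right (∑ j ∈ B, p j) (∑ j ∈ S \ B, p j)]

lemma minLoad_symmDiff_le (hp : ∀ j ∈ S, 0 ≤ p j) {X Y : Finset α} (hX : X ⊆ S)
    (hY : Y ⊆ S) :
    minLoad p S (X ∆ Y) ≤ minLoad p S X + minLoad p S Y := by
  have hS : ∀ {V W : Finset α}, V ⊆ S → W ⊆ S → ∀ j ∈ V ∪ W, 0 ≤ p j :=
    fun hV hW j hj ↦ hp j (union_subset hV hW hj)
  have hXc : S \ X ⊆ S := sdiff_subset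
  have hYc : S \ Y ⊆ S := sdiff_subset
  -- each of the four choices of sides of `X` and `Y` covers one side of `X ∆ Y`
  have h₁ : minLoad p S (X ∆ Y) ≤ ∑ j ∈ X, p j + ∑ j ∈ Y, p j :=
    (min_le_left _ _).trans <| sum_le_sum_add_sum_of_subset_union
      (fun j ↦ by simp only [mem_symmDiff, mem_union]; tauto) (hS hX hY)
  have h₂ : minLoad p S (X ∆ Y) ≤ ∑ j ∈ X, p j + ∑ j ∈ S \ Y, p j :=
    (min_le_right _ _).trans <| sum_le_sum_add_sum_of_subset_union
      (fun j ↦ by simp only [mem_symmDiff, mem_union, mem_sdiff]; tauto) (hS hX hYc)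
  have h₃ : minLoad p S (X ∆ Y) ≤ ∑ j ∈ S \ X, p j + ∑ j ∈ Y, p j :=
    (min_le_right _ _).trans <| sum_le_sum_add_sum_of_subset_union
      (fun j ↦ by simp only [mem_symmDiff, mem_union, mem_sdiff]; tauto) (hS hXc hY)
  have h₄ : minLoad p S (X ∆ Y) ≤ ∑ j ∈ S \ X, p j + ∑ j ∈ S \ Y, p j :=
    (min_le_left _ _).trans <| sum_le_sum_add_sum_of_subset_union
      (fun j ↦ by
        have := @hX j
        have := @hY j
        simp only [mem_symmDiff, mem_union, mem_sdiff]
        tauto) (hS hXc hYc)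
  rw [minLoad.eq_1 p S X, minLoad.eq_1 p S Y, ← min_add_add_right, ← min_add_add_left,
    ← min_add_add_left]
  exact le_min (le_min h₁ h₂) (le_min h₃ h₄)

lemma two_pow_card_mul_minLoad_le (hp : ∀ j ∈ S, 0 ≤ p j) {A : Finset α} (hA : A ⊆ S) :
    2 ^ S.card * minLoad p S A ≤ 2 * ∑ B ∈ S.powerset, minLoad p S B := by
  have hmap : ∀ B ∈ S.powerset, B ∆ A ∈ S.powerset := fun B hB ↦
    mem_powerset.mpr (symmDiff_le_sup.trans (union_subset (mem_powerset.mp hB) hA))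
  have hperm : ∑ B ∈ S.powerset, minLoad p S (B ∆ A) = ∑ B ∈ S.powerset, minLoad p S B :=
    sum_nbij' (· ∆ A) (· ∆ A) hmap hmap (fun B _ ↦ symmDiff_symmDiff_cancel_right A B)
      (fun B _ ↦ symmDiff_symmDiff_cancel_right A B) fun _ _ ↦ rfl
  have hpoint : ∀ B ∈ S.powerset, minLoad p S A ≤ minLoad p S B + minLoad p S (B ∆ A) := by
    intro B hB
    simpa only [symmDiff_symmDiff_cancel_left] using
      minLoad_symmDiff_le hp (mem_powerset.mp hB) (mem_powerset.mp (hmap B hB))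
  calc 2 ^ S.card * minLoad p S A = ∑ _B ∈ S.powerset, minLoad p S A := by
        rw [sum_const, card_powerset, nsmul_eq_mul, Nat.cast_pow, Nat.cast_ofNat]
    _ ≤ ∑ B ∈ S.powerset, (minLoad p S B + minLoad p S (B ∆ A)) := sum_le_sum hpoint
    _ = 2 * ∑ B ∈ S.powerset, minLoad p S B := by rw [sum_add_distrib, hperm, two_mul]

end MinLoad

lemma sum_powerset_eq_two_nsmul_sum_filter_mem {α β : Type*} [DecidableEq α] [AddCommMonoid β]
    {S : Finset α} {s₀ : α} (hs₀ : s₀ ∈ S) (f : Finset α → β)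
    (hf : ∀ B ⊆ S, f (S \ B) = f B) :
    ∑ B ∈ S.powerset, f B = 2 • ∑ B ∈ S.powerset.filter (s₀ ∈ ·), f B := by
  rw [← sum_filter_add_sum_filter_not S.powerset (s₀ ∈ ·), two_nsmul]
  congr 1
  refine sum_nbij' (S \ ·) (S \ ·) ?_ ?_ ?_ ?_
    fun B hB ↦ (hf B (mem_powerset.mp (mem_filter.mp hB).1)).symm
  · intro B hB
    simp only [mem_filter, mem_powerset] at hB ⊢
    exact ⟨sdiff_subset, mem_sdiff.mpr ⟨hs₀, hB.2⟩⟩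
  · intro B hB
    simp only [mem_filter, mem_powerset] at hB ⊢
    exact ⟨sdiff_subset, fun h ↦ (mem_sdiff.mp h).2 hB.2⟩
  all_goals exact fun B hB ↦ Finset.sdiff_sdiff_eq_self (mem_powerset.mp (mem_filter.mp hB).1)

lemma neg_quarter_le_of_mul_le_two_mul {N M a T : ℝ} (hN : 2 ≤ N) (ha : a ≤ T / 2)
    (hM : N * a ≤ 2 * M) :
    -(1 / 4) * ((N - 2) / (N - 1)) * T ≤ 1 / (N - 1) * M - a := by
  have hN₁ : 0 < N - 1 := by linarith
  rw [← sub_nonneg]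
  have hform : 1 / (N - 1) * M - a - -(1 / 4) * ((N - 2) / (N - 1)) * T
      = ((M - N * a / 2) + (N - 2) / 2 * (T / 2 - a)) / (N - 1) := by
    field_simp
    ring
  rw [hform]
  exact div_nonneg (add_nonneg (by linarith) (mul_nonneg (by linarith) (by linarith))) hN₁.le

theorem stmt_12 {α : Type*} [DecidableEq α] (S : Finset α) (hS : 2 ≤ S.card)
    (s₀ : α) (hs₀ : s₀ ∈ S) (p : α → ℝ) (hp : ∀ j ∈ S, 0 ≤ p j)
    (P : Finset (Finset α)) (hP : P = S.powerset.filter fun B => s₀ ∈ B)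
    (N : ℝ) (hN : N = 2 ^ (S.card - 1))
    (m : Finset α → ℝ) (hm : ∀ B, m B = min (∑ j ∈ B, p j) (∑ j ∈ S \ B, p j))
    (w : Finset α → ℝ)
    (hw : ∀ A, w A = (1 / (N - 1)) * ∑ B ∈ P, m B - m A)
    (A : Finset α) (hA : A ∈ P) :
    w A ≥ -(1 / 4) * ((N - 2) / (N - 1)) * ∑ j ∈ S, p j := by
  obtain rfl : m = minLoad p S := funext hm
  subst hP
  have hAS : A ⊆ S := mem_powerset.mp (mem_filter.mp hA).1
  have hhalf := sum_powerset_eq_two_nsmul_sum_filter_mem hs₀ (minLoad p S)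
    fun _ hB ↦ minLoad_sdiff hB
  have hpow : (2 : ℝ) ^ S.card = 2 * N := by rw [hN, ← pow_succ']; congr 1; omega
  have hN₂ : 2 ≤ N := by
    rw [hN]; exact le_self_pow₀ (by norm_num) (by omega)
  have havg := two_pow_card_mul_minLoad_le hp hAS
  rw [hhalf, hpow, two_nsmul] at havg
  rw [hw]
  exact neg_quarter_le_of_mul_le_two_mul hN₂ (minLoad_le_half hAS) (by linarith)
end
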